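/- arXiv:2405.02226 — 4 statements merged into one kernel-verified Lean document; each statement's English description precedes it below -/
import Mathlib

section
/- Let V be a real vector space with finite dimension n ≥ 1, let Φ ⊆ V be a finite subset with 0 ∉ Φ, Φ = −Φ, and Φ spanning V, and let f : V → ℝ be a linear functional with f(α) ≠ 0 for every α ∈ Φ. Then there exist elements α₁, …, αₙ ∈ Φ which are linearly independent, satisfy f(αᵢ) > 0 for every i, and such that for all i ≠ j the sum αᵢ + αⱼ does not belong to Φ. -/
/-!
Among the linearly independent `n`-tuples of positive roots (there is one, since the positive
roots span `V`), choose one maximizing `∑ i, f (α i)`. If `α i + α j` were a root for some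
`i ≠ j`, it would be a positive root, and replacing `α i` by `α i + α j` would give another
linearly independent tuple of positive roots with a larger sum `f (α j) + ∑ i, f (α i)`.
-/

open Module Submodule

theorem LinearIndependent.update_add_self {K V ι : Type*} [DivisionRing K] [AddCommGroup V]
    [Module K V] [Fintype ι] [DecidableEq ι] {v : ι → V} (hv : LinearIndependent K v)
    {i j : ι} (hij : i ≠ j) : LinearIndependent K (Function.update v i (v i + v j)) := by
  have hspan := span_range_update_add_smul (R := K) hij.symm v 1
  rw [one_smul] at hspan
  rwa [linearIndependent_iff_card_eq_finrank_span, Set.finrank, hspan, ← Set.finrank,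
    ← linearIndependent_iff_card_eq_finrank_span]

theorem exists_linearIndependent_fin_subset_of_span_eq_top {K V : Type*} [DivisionRing K]
    [AddCommGroup V] [Module K V] [FiniteDimensional K V] {n : ℕ} (hdim : finrank K V = n)
    {s : Set V} (hs : span K s = ⊤) : ∃ v : Fin n → V, (∀ i, v i ∈ s) ∧ LinearIndependent K v := by
  let b := Basis.ofSpan hs.ge
  let e := b.indexEquiv (finBasisOfFinrankEq K V hdim)
  exact ⟨b ∘ e.symm, fun i => Basis.ofSpan_subset hs.ge ⟨_, rfl⟩,
    b.linearIndependent.comp _ e.symm.injective⟩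

theorem span_setOf_pos_eq {K V : Type*} [Field K] [LinearOrder K] [IsStrictOrderedRing K]
    [AddCommGroup V] [Module K V] {s : Set V} (hneg : ∀ v, -v ∈ s ↔ v ∈ s) (f : V →ₗ[K] K)
    (hf : ∀ v ∈ s, f v ≠ 0) : span K {v ∈ s | 0 < f v} = span K s := by
  refine le_antisymm (span_mono fun v hv => hv.1) (span_le.2 fun v hv => ?_)
  rcases (hf v hv).lt_or_gt with hlt | hgt
  · have hmem : -v ∈ {v ∈ s | 0 < f v} := ⟨(hneg v).2 hv, by simpa using hlt⟩
    simpa using neg_mem (subset_span hmem)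
  · exact subset_span ⟨hv, hgt⟩

theorem sum_comp_update {ι X M : Type*} [Fintype ι] [DecidableEq ι] [AddCommGroup M]
    (g : X → M) (v : ι → X) (i : ι) (x : X) :
    ∑ k, g (Function.update v i x k) = g x - g (v i) + ∑ k, g (v k) := by
  simp only [← Function.comp_apply (f := g), Function.comp_update]
  rw [Finset.sum_update_of_mem (Finset.mem_univ i),
    Finset.sum_eq_add_sum_sdiff_singleton_of_mem (Finset.mem_univ i) (g ∘ v), Function.comp_apply]
  abel

theorem exists_linearIndependent_forall_add_notMem {K V ι : Type*} [Field K] [LinearOrder K]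
    [IsStrictOrderedRing K] [AddCommGroup V] [Module K V] [Fintype ι] (P : Finset V)
    (f : V →ₗ[K] K) (hpos : ∀ v ∈ P, 0 < f v)
    (hP : ∃ v : ι → V, (∀ i, v i ∈ P) ∧ LinearIndependent K v) :
    ∃ v : ι → V, (∀ i, v i ∈ P) ∧ LinearIndependent K v ∧ ∀ i j, i ≠ j → v i + v j ∉ P := by
  classical
  let T := {v ∈ Fintype.piFinset fun _ : ι => P | LinearIndependent K v}
  have hT : T.Nonempty := by simpa [T, Finset.Nonempty] using hP
  obtain ⟨v, hvT, hmax⟩ := T.exists_max_image (fun v => ∑ k, f (v k)) hT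
  simp only [T, Finset.mem_filter, Fintype.mem_piFinset] at hvT hmax
  refine ⟨v, hvT.1, hvT.2, fun i j hij hsum => ?_⟩
  have hupdate : ∀ k, Function.update v i (v i + v j) k ∈ P := by
    intro k
    rcases eq_or_ne k i with rfl | hk
    · simpa using hsum
    · simpa [Function.update_of_ne hk] using hvT.1 k
  have hle := hmax _ ⟨hupdate, hvT.2.update_add_self hij⟩
  rw [sum_comp_update, map_add] at hle
  linarith [hpos _ (hvT.1 j)]

theorem exists_maximal_positive_roots_general
    (V : Type*) [AddCommGroup V] [Module ℝ V] [FiniteDimensional ℝ V]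
    (n : ℕ) (hdim : Module.finrank ℝ V = n)
    (Φ : Finset V)
    (hneg : ∀ α : V, -α ∈ Φ ↔ α ∈ Φ)
    (hspan : Submodule.span ℝ (Φ : Set V) = ⊤)
    (f : V →ₗ[ℝ] ℝ) (hf : ∀ α ∈ Φ, f α ≠ 0) :
    ∃ α : Fin n → V, (∀ i, α i ∈ Φ) ∧ LinearIndependent ℝ α ∧
      (∀ i, 0 < f (α i)) ∧ ∀ i j : Fin n, i ≠ j → α i + α j ∉ Φ := by
  classical
  set Φpos := {α ∈ Φ | 0 < f α}
  have hspan_pos : span ℝ (Φpos : Set V) = ⊤ := by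
    rw [Finset.coe_filter]
    exact (span_setOf_pos_eq hneg f hf).trans hspan
  obtain ⟨α, hαpos, hα, hsum⟩ := exists_linearIndependent_forall_add_notMem Φpos f
    (fun _ hv => (Finset.mem_filter.1 hv).2)
    (exists_linearIndependent_fin_subset_of_span_eq_top hdim hspan_pos)
  simp only [Φpos, Finset.mem_filter, map_add, not_and] at hαpos hsum
  refine ⟨α, fun i => (hαpos i).1, hα, fun i => (hαpos i).2, fun i j hij hmem => ?_⟩
  exact hsum i j hij hmem (add_pos (hαpos i).2 (hαpos j).2)

/-- **Finding the roots α₁, …, αₙ** (Appendix): given a finite spanning set `Φ` of nonzero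
vectors in an `n`-dimensional real vector space with `Φ = -Φ`, and a linear functional `f`
which is nonvanishing on `Φ` (a "regular" functional), there are `n` linearly independent
elements of `Φ` on which `f` is positive and whose pairwise sums lie outside `Φ`. -/
theorem exists_maximal_positive_roots
    (V : Type*) [AddCommGroup V] [Module ℝ V] [FiniteDimensional ℝ V]
    (n : ℕ) (hn : 1 ≤ n) (hdim : Module.finrank ℝ V = n)
    (Φ : Finset V) (h0 : (0 : V) ∉ Φ)
    (hneg : ∀ α : V, -α ∈ Φ ↔ α ∈ Φ)
    (hspan : Submodule.span ℝ (Φ : Set V) = ⊤)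
    (f : V →ₗ[ℝ] ℝ) (hf : ∀ α ∈ Φ, f α ≠ 0) :
    ∃ α : Fin n → V, (∀ i, α i ∈ Φ) ∧ LinearIndependent ℝ α ∧
      (∀ i, 0 < f (α i)) ∧ ∀ i j : Fin n, i ≠ j → α i + α j ∉ Φ :=
  exists_maximal_positive_roots_general V n hdim Φ hneg hspan f hf
end

section
/- Let m be a natural number, let X and Z be m × m real matrices, and let c be a real number such that X·Z − Z·X = c • Z. Then exp(X) · exp(Z) = exp(e^c • Z) · exp(X), where exp denotes the matrix exponential and e^c = Real.exp c. -/
/-!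
From `X * Z - Z * X = c • Z` we get `X * Z = Z * (X + c)`, so `Z` intertwines every power series
in `X + c` with the same series in `X`; for the exponential this reads
`exp X * Z = (e^c • Z) * exp X`. Intertwining once more, now by `exp X`, passes from `Z` and
`e^c • Z` to their exponentials.
-/

open NormedSpace

section BanachAlgebra

variable {𝔸 : Type*} [NormedRing 𝔸] [NormedAlgebra ℝ 𝔸] [CompleteSpace 𝔸]

theorem exp_add_smul_one (x : 𝔸) (c : ℝ) : exp (x + c • 1) = Real.exp c • exp x := by
  let +nondep : NormedAlgebra ℚ 𝔸 := .restrictScalars ℚ ℝ 𝔸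
  rw [exp_add_of_commute ((Commute.one_right x).smul_right c), ← Algebra.algebraMap_eq_smul_one,
    ← algebraMap_exp_comm, Real.exp_eq_exp_ℝ, ← Algebra.commutes, ← Algebra.smul_def]

theorem semiconjBy_exp_of_mul_sub_mul_eq_smul {X Z : 𝔸} {c : ℝ} (h : X * Z - Z * X = c • Z) :
    SemiconjBy (exp X) Z (Real.exp c • Z) := by
  let +nondep : NormedAlgebra ℚ 𝔸 := .restrictScalars ℚ ℝ 𝔸
  have hshift : SemiconjBy Z (X + c • 1) X := by
    rw [SemiconjBy, mul_add, mul_smul_one, ← h]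
    abel
  have hexp : Z * (Real.exp c • exp X) = exp X * Z := exp_add_smul_one X c ▸ hshift.exp_right
  rw [SemiconjBy, ← hexp, mul_smul_comm, smul_mul_assoc]

theorem exp_mul_exp_of_mul_sub_mul_eq_smul {X Z : 𝔸} {c : ℝ} (h : X * Z - Z * X = c • Z) :
    exp X * exp Z = exp (Real.exp c • Z) * exp X :=
  let +nondep : NormedAlgebra ℚ 𝔸 := .restrictScalars ℚ ℝ 𝔸
  (semiconjBy_exp_of_mul_sub_mul_eq_smul h).exp_right

end BanachAlgebra

/-- If `X·Z − Z·X = c • Z` for real `m × m` matrices, then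
`exp X * exp Z = exp (e^c • Z) * exp X`. -/
theorem exp_mul_exp_of_bracket_eq_smul
    (m : ℕ) (X Z : Matrix (Fin m) (Fin m) ℝ) (c : ℝ)
    (h : X * Z - Z * X = c • Z) :
    exp X * exp Z = exp (Real.exp c • Z) * exp X :=
  open scoped Matrix.Norms.Operator in exp_mul_exp_of_mul_sub_mul_eq_smul h
end

section
/- Let L be a Lie algebra over ℝ, let H be an abelian Lie subalgebra of L, let n ≥ 1, and let α₁, …, αₙ : H → ℝ be linearly independent linear functionals. Suppose Z₁, …, Zₙ are nonzero elements of L such that ⁅X, Zᵢ⁆ = αᵢ(X) • Zᵢ for every X ∈ H and every i, and ⁅Zᵢ, Zⱼ⁆ = 0 for all i ≠ j. Then there exists an injective Lie algebra homomorphism from the n-fold direct product 𝔟 × ⋯ × 𝔟 into L, where 𝔟 is the two-dimensional real Lie algebra of upper-triangular traceless 2 × 2 real matrices (those of the form [[t, s],[0, −t]]). -/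
/-!
Since the `αᵢ` are linearly independent, `X ↦ (αᵢ X)ᵢ` maps `H` onto `ℝⁿ`, so there are `Xᵢ ∈ H`
with `αⱼ Xᵢ = 2 δᵢⱼ`. Then `⁅Xᵢ, Zᵢ⁆ = 2 • Zᵢ` is the defining relation of `𝔟`, and the pairs
`(Xᵢ, Zᵢ)` for distinct `i` commute because `H` is abelian, so the `i`-th copy of `𝔟` maps onto
`span {Xᵢ, Zᵢ}`. The sum of these maps is injective: bracketing with `Xⱼ` isolates the
`Zⱼ`-coefficient, and the `Xᵢ` are linearly independent since `α` sends them to `2 • Pi.single i 1`.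
-/

open DirectSum

attribute [local instance 100] LieRing.ofAssociativeRing

/-- The two-dimensional real Lie algebra `𝔟` of upper-triangular traceless `2 × 2` real
matrices, i.e. matrices of the form `[[t, s], [0, -t]]`, viewed as a Lie subalgebra of
`Matrix (Fin 2) (Fin 2) ℝ` with the commutator bracket. -/
def upperTriangularTraceless : LieSubalgebra ℝ (Matrix (Fin 2) (Fin 2) ℝ) where
  carrier := {A | A 1 0 = 0 ∧ A 1 1 = -A 0 0}
  add_mem' := by
    rintro A B ⟨hA1, hA2⟩ ⟨hB1, hB2⟩
    refine ⟨?_, ?_⟩ <;> (simp [Matrix.add_apply, hA1, hA2, hB1, hB2]; try ring)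
  zero_mem' := by simp [Set.mem_setOf_eq]
  smul_mem' := by
    rintro c A ⟨hA1, hA2⟩
    refine ⟨?_, ?_⟩ <;> simp [Matrix.smul_apply, hA1, hA2]
  lie_mem' := by
    rintro A B ⟨hA1, hA2⟩ ⟨hB1, hB2⟩
    refine ⟨?_, ?_⟩ <;>
      (simp [Ring.lie_def, Matrix.sub_apply, Matrix.mul_apply, Fin.sum_univ_two,
        hA1, hA2, hB1, hB2]; try ring)

theorem LinearMap.pi_surjective_of_linearIndependent {ι K E : Type*} [Finite ι] [Field K]
    [AddCommGroup E] [Module K E] {α : ι → E →ₗ[K] K} (hα : LinearIndependent K α) :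
    Function.Surjective (LinearMap.pi α) := by
  have hα' : LinearIndependent K fun i => ⇑(α i) :=
    hα.map' (LinearMap.ltoFun K E K K) (LinearMap.ker_eq_bot.mpr DFunLike.coe_injective)
  rw [← LinearMap.range_eq_top, ← span_flip_eq_top_iff_linearIndependent.mpr hα',
    ← Submodule.span_eq (LinearMap.range (LinearMap.pi α))]
  rfl

namespace upperTriangularTraceless

theorem ext {A B : upperTriangularTraceless} (h₀₀ : A.1 0 0 = B.1 0 0)
    (h₀₁ : A.1 0 1 = B.1 0 1) : A = B := by
  obtain ⟨hA₁₀, hA₁₁⟩ := A.2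
  obtain ⟨hB₁₀, hB₁₁⟩ := B.2
  refine Subtype.ext (Matrix.ext fun k l => ?_)
  fin_cases k <;> fin_cases l <;> simp_all

theorem lie_apply_zero_zero (A B : upperTriangularTraceless) :
    (⁅A, B⁆ : upperTriangularTraceless).1 0 0 = 0 := by
  obtain ⟨hA₁₀, -⟩ := A.2
  obtain ⟨hB₁₀, -⟩ := B.2
  simp [Ring.lie_def, Matrix.mul_apply, hA₁₀, hB₁₀, mul_comm]

theorem lie_apply_zero_one (A B : upperTriangularTraceless) :
    (⁅A, B⁆ : upperTriangularTraceless).1 0 1 = 2 * (A.1 0 0 * B.1 0 1 - A.1 0 1 * B.1 0 0) := by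
  obtain ⟨-, hA₁₁⟩ := A.2
  obtain ⟨-, hB₁₁⟩ := B.2
  simp only [LieSubalgebra.coe_bracket, Ring.lie_def, Matrix.sub_apply, Matrix.mul_apply,
    Fin.sum_univ_two, hA₁₁, hB₁₁]
  ring

variable {L : Type*} [LieRing L] [LieAlgebra ℝ L]

/-- `X₀ = diag(1, -1)` and `Z₀ = E₀₁` span `𝔟`, with `⁅X₀, Z₀⁆ = 2 • Z₀`; `lift` sends them to
`X` and `Z`. -/
def lift (X Z : L) (h : ⁅X, Z⁆ = (2 : ℝ) • Z) : upperTriangularTraceless →ₗ⁅ℝ⁆ L where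
  toFun A := A.1 0 0 • X + A.1 0 1 • Z
  map_add' A B := by simp only [AddMemClass.coe_add, Matrix.add_apply, add_smul]; abel
  map_smul' c A := by simp [smul_add, smul_smul]
  map_lie' {A B} := by
    simp only [lie_apply_zero_zero, lie_apply_zero_one, lie_add, add_lie, lie_smul, smul_lie,
      lie_self, h, ← lie_skew Z X]
    module

theorem lift_apply (X Z : L) (h : ⁅X, Z⁆ = (2 : ℝ) • Z) (A : upperTriangularTraceless) :
    lift X Z h A = A.1 0 0 • X + A.1 0 1 • Z :=
  rfl

theorem lie_lift_lift_eq_zero {X Z X' Z' : L} (h : ⁅X, Z⁆ = (2 : ℝ) • Z)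
    (h' : ⁅X', Z'⁆ = (2 : ℝ) • Z') (hXX' : ⁅X, X'⁆ = 0) (hXZ' : ⁅X, Z'⁆ = 0) (hZX' : ⁅Z, X'⁆ = 0)
    (hZZ' : ⁅Z, Z'⁆ = 0) (A B : upperTriangularTraceless) :
    ⁅lift X Z h A, lift X' Z' h' B⁆ = 0 := by
  simp [lift_apply, hXX', hXZ', hZX', hZZ']

variable {ι : Type*} [DecidableEq ι] (X Z : ι → L) (hXZ : ∀ i, ⁅X i, Z i⁆ = (2 : ℝ) • Z i)
  (hXX : Pairwise fun i j => ⁅X i, X j⁆ = 0) (hXZ_ne : Pairwise fun i j => ⁅X i, Z j⁆ = 0)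
  (hZZ : Pairwise fun i j => ⁅Z i, Z j⁆ = 0)

def liftDirectSum : (⨁ _ : ι, upperTriangularTraceless) →ₗ⁅ℝ⁆ L :=
  DirectSum.toLieAlgebra L (fun i => lift (X i) (Z i) (hXZ i)) fun i j hij =>
    lie_lift_lift_eq_zero _ _ (hXX hij) (hXZ_ne hij)
      (by rw [← lie_skew, hXZ_ne hij.symm, neg_zero]) (hZZ hij)

theorem liftDirectSum_of (i : ι) (A : upperTriangularTraceless) :
    liftDirectSum X Z hXZ hXX hXZ_ne hZZ (DirectSum.of _ i A) = A.1 0 0 • X i + A.1 0 1 • Z i := by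
  show DirectSum.toModule ℝ ι L (fun i => (lift (X i) (Z i) (hXZ i) :
    upperTriangularTraceless →ₗ[ℝ] L)) _ = _
  rw [← DirectSum.lof_eq_of ℝ, DirectSum.toModule_lof]
  rfl

theorem liftDirectSum_apply [Fintype ι] (x : ⨁ _ : ι, upperTriangularTraceless) :
    liftDirectSum X Z hXZ hXX hXZ_ne hZZ x = ∑ i, ((x i).1 0 0 • X i + (x i).1 0 1 • Z i) := by
  conv_lhs => rw [← DirectSum.sum_univ_of x]
  simp only [map_sum, liftDirectSum_of]

theorem lie_liftDirectSum [Fintype ι] (j : ι) (x : ⨁ _ : ι, upperTriangularTraceless) :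
    ⁅X j, liftDirectSum X Z hXZ hXX hXZ_ne hZZ x⁆ = (2 * (x j).1 0 1) • Z j := by
  rw [liftDirectSum_apply, lie_sum, Finset.sum_eq_single j]
  · simp [hXZ, smul_smul, mul_comm]
  · intro i _ hij
    simp [hXX hij.symm, hXZ_ne hij.symm]
  · simp

theorem liftDirectSum_injective [Fintype ι] (hX : LinearIndependent ℝ X) (hZ : ∀ i, Z i ≠ 0) :
    Function.Injective (liftDirectSum X Z hXZ hXX hXZ_ne hZZ) := by
  rw [injective_iff_map_eq_zero]
  intro x hx
  have h₀₁ (j : ι) : (x j).1 0 1 = 0 := by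
    have h := lie_liftDirectSum X Z hXZ hXX hXZ_ne hZZ j x
    rw [hx, lie_zero, eq_comm, smul_eq_zero] at h
    simpa [hZ j] using h
  have h₀₀ : ∀ j, (x j).1 0 0 = 0 := by
    rw [liftDirectSum_apply] at hx
    simp only [h₀₁, zero_smul, add_zero] at hx
    exact Fintype.linearIndependent_iff.mp hX _ hx
  ext j : 1
  exact ext (h₀₀ j) (h₀₁ j)

end upperTriangularTraceless

open upperTriangularTraceless in
theorem exists_injective_lieHom_of_commuting_root_vectors_general
    (L : Type*) [LieRing L] [LieAlgebra ℝ L]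
    (H : LieSubalgebra ℝ L) (hH : IsLieAbelian H)
    (n : ℕ)
    (α : Fin n → (H →ₗ[ℝ] ℝ)) (hα : LinearIndependent ℝ α)
    (Z : Fin n → L) (hZ : ∀ i, Z i ≠ 0)
    (hbr : ∀ (X : H) (i : Fin n), ⁅(X : L), Z i⁆ = α i X • Z i)
    (hcomm : ∀ i j : Fin n, i ≠ j → ⁅Z i, Z j⁆ = 0) :
    ∃ φ : (⨁ _ : Fin n, upperTriangularTraceless) →ₗ⁅ℝ⁆ L, Function.Injective φ := by
  choose X hX using fun i => LinearMap.pi_surjective_of_linearIndependent hα (Pi.single i (2 : ℝ))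
  have hαX (i j : Fin n) : α j (X i) = (Pi.single i 2 : Fin n → ℝ) j := by
    rw [← hX i, LinearMap.pi_apply]
  have hXZ (i : Fin n) : ⁅(X i : L), Z i⁆ = (2 : ℝ) • Z i := by rw [hbr, hαX, Pi.single_eq_same]
  have hXZ_ne (i j : Fin n) (hij : i ≠ j) : ⁅(X i : L), Z j⁆ = 0 := by
    rw [hbr, hαX, Pi.single_eq_of_ne hij.symm, zero_smul]
  have hXX (i j : Fin n) : ⁅(X i : L), (X j : L)⁆ = 0 := by
    rw [← LieSubalgebra.coe_bracket, trivial_lie_zero, ZeroMemClass.coe_zero]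
  have hX_li : LinearIndependent ℝ fun i => (X i : L) := by
    refine (LinearIndependent.of_comp (LinearMap.pi α) ?_).map' H.toSubmodule.subtype
      H.toSubmodule.ker_subtype
    simpa only [Function.comp_def, hX] using
      Pi.linearIndependent_single_of_ne_zero fun _ => two_ne_zero
  exact ⟨liftDirectSum _ Z hXZ (fun i j _ => hXX i j) hXZ_ne hcomm,
    liftDirectSum_injective _ _ _ _ _ _ hX_li hZ⟩

/-- The Lie-algebra content of the Appendix: given an abelian Lie subalgebra `H`, linearly
independent functionals `α₁, …, αₙ` on `H` and nonzero `Z₁, …, Zₙ` with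
`⁅X, Zᵢ⁆ = αᵢ(X) • Zᵢ` and `⁅Zᵢ, Zⱼ⁆ = 0` for `i ≠ j`, the `n`-fold product of the affine
Lie algebra `𝔟` embeds into `L`. -/
theorem exists_injective_lieHom_of_commuting_root_vectors
    (L : Type*) [LieRing L] [LieAlgebra ℝ L]
    (H : LieSubalgebra ℝ L) (hH : IsLieAbelian H)
    (n : ℕ) (hn : 1 ≤ n)
    (α : Fin n → (H →ₗ[ℝ] ℝ)) (hα : LinearIndependent ℝ α)
    (Z : Fin n → L) (hZ : ∀ i, Z i ≠ 0)
    (hbr : ∀ (X : H) (i : Fin n), ⁅(X : L), Z i⁆ = α i X • Z i)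
    (hcomm : ∀ i j : Fin n, i ≠ j → ⁅Z i, Z j⁆ = 0) :
    ∃ φ : (⨁ _ : Fin n, upperTriangularTraceless) →ₗ⁅ℝ⁆ L, Function.Injective φ :=
  exists_injective_lieHom_of_commuting_root_vectors_general L H hH n α hα Z hZ hbr hcomm
end

section
/- For all points z and w of the hyperbolic upper half-plane with equal imaginary parts (z.im = w.im), letting d = dist(z, w) be their hyperbolic distance, the two points z₁ and w₁ obtained by moving z and w hyperbolic arclength d along the upward vertical geodesics (i.e. z₁ has real part z.re and imaginary part z.im · e^d, and w₁ has real part w.re and imaginary part w.im · e^d) satisfy dist(z₁, w₁) ≤ 1. -/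
/-!
Two points at height `y` whose real parts are `r` apart are at distance `d = 2 arsinh s`,
`s = r / (2y)`. Flowing both up by `d` multiplies the height by `eᵈ`, so their new distance is
`2 arsinh (s e⁻ᵈ)`. Since `s = sinh (d/2) ≤ eᵈ / 2`, the argument is at most `1/2`, and
`arsinh x ≤ x` gives the bound `1`.
-/

open UpperHalfPlane Real

lemma Real.arsinh_le_self {x : ℝ} (hx : 0 ≤ x) : arsinh x ≤ x := by
  rw [← sinh_le_sinh, sinh_arsinh]
  exact self_le_sinh_iff.mpr hx

lemma Real.sinh_le_exp_two_mul_div_two (a : ℝ) : sinh a ≤ exp (2 * a) / 2 := by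
  have hinv : exp (-a) * exp a = 1 := by rw [← exp_add, neg_add_cancel, exp_zero]
  rw [sinh_eq, mul_comm, exp_mul, rpow_two]
  nlinarith [exp_pos a, exp_pos (-a), sq_nonneg (exp a - 1)]

lemma Real.div_exp_two_mul_arsinh_le (s : ℝ) : s / exp (2 * arsinh s) ≤ 1 / 2 := by
  rw [div_le_iff₀ (exp_pos _)]
  simpa [div_eq_inv_mul, mul_comm] using sinh_le_exp_two_mul_div_two (arsinh s)

theorem UpperHalfPlane.dist_of_im_eq {z w : ℍ} (h : z.im = w.im) :
    dist z w = 2 * arsinh (dist z.re w.re / (2 * z.im)) := by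
  rw [dist_eq, Complex.dist_of_im_eq h, ← h, sqrt_mul_self z.im_pos.le]
  rfl

/-- Lemma 4.3 in `ℍ²`: if `z, w` lie on a common horocycle centered at `∞` (equal imaginary
parts) and we flow both of them distance `d = dist z w` along the upward vertical geodesics
toward `∞`, the resulting points are at hyperbolic distance at most `1`. -/
theorem dist_le_one_of_flow_toward_infinity (z w : ℍ) (h : z.im = w.im) :
    dist (UpperHalfPlane.mk ⟨z.re, z.im * Real.exp (dist z w)⟩
            (mul_pos z.im_pos (Real.exp_pos _)))
         (UpperHalfPlane.mk ⟨w.re, w.im * Real.exp (dist z w)⟩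
            (mul_pos w.im_pos (Real.exp_pos _))) ≤ 1 := by
  set s := dist z.re w.re / (2 * z.im)
  have hd : dist z w = 2 * arsinh s := dist_of_im_eq h
  rw [dist_of_im_eq (by simp [h])]
  simp only [mk_re, mk_im]
  rw [show dist z.re w.re / (2 * (z.im * exp (dist z w))) = s / exp (dist z w) by ring, hd]
  have hs : 0 ≤ s / exp (2 * arsinh s) := by positivity
  linarith [arsinh_le_self hs, div_exp_two_mul_arsinh_le s]
end
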